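/- arXiv:1605.04548 — 3 statements merged into one kernel-verified Lean document; each statement's English description precedes it below -/
import Mathlib

section
/- Let A be an integral Noetherian ring, a₁, ..., a_r a regular sequence in A, and fix an index i. Let R = A[X₁, ..., X̂ᵢ, ..., X_r]/J where J is generated by the elements a_j − X_j·a_i for j ≠ i (the variable Xᵢ is omitted). Then R is an integral domain. -/
/-!
Write `J` for the ideal of the chart. As soon as `aᵢ` is a nonzerodivisor modulo `J`, `J` is the
kernel of `A[X] → Frac A`, `X_j ↦ a_j / aᵢ`, hence prime: modulo `J`, a power of `aᵢ` times any
polynomial is a constant.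

That `aᵢ` is a nonzerodivisor modulo `J` is where regularity enters. The sequence stays weakly
regular on the flat `A`-algebra `A[X]`, so its syzygies are Koszul, and a relation `aᵢ g ∈ J`
yields a syzygy whose Koszul form exhibits `g` itself as an element of `J`.
-/

open MvPolynomial

section

variable {R M : Type*} [CommRing R] [AddCommGroup M] [Module R M]

lemma Ideal.ofList_ofFn {n : ℕ} (b : Fin n → R) :
    Ideal.ofList (List.ofFn b) = Ideal.span (Set.range b) :=
  congrArg Ideal.span (Set.ext fun _ => List.mem_ofFn' b _)

lemma Submodule.mem_span_range_smul_top_iff {ι : Type*} [Fintype ι] (b : ι → R) (x : M) :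
    x ∈ (Ideal.span (Set.range b) • ⊤ : Submodule R M) ↔ ∃ u : ι → M, ∑ k, b k • u k = x := by
  constructor
  · intro hx
    refine Submodule.smul_induction_on hx (fun r hr y _ => ?_) ?_
    · obtain ⟨c, rfl⟩ := (Submodule.mem_span_range_iff_exists_fun R).mp hr
      exact ⟨fun k => c k • y, by simp_rw [Finset.sum_smul, smul_eq_mul, mul_comm, mul_smul]⟩
    · rintro _ _ ⟨u, rfl⟩ ⟨v, rfl⟩
      exact ⟨u + v, by simp [Finset.sum_add_distrib]⟩
  · rintro ⟨u, rfl⟩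
    exact Submodule.sum_mem _ fun k _ =>
      Submodule.smul_mem_smul (Ideal.subset_span ⟨k, rfl⟩) trivial

end

lemma Finset.sum_sum_sub_swap_mul_mul_eq_zero {ι P : Type*} [Fintype ι] [CommRing P]
    (d : ι → ι → P) (f : ι → P) : ∑ k, ∑ l, (d k l - d l k) * f l * f k = 0 := by
  simp only [sub_mul, Finset.sum_sub_distrib]
  rw [Finset.sum_comm (f := fun k l => d l k * f l * f k)]
  simp only [mul_right_comm, sub_self]

namespace RingTheory.Sequence

variable {R M : Type*} [CommRing R] [AddCommGroup M] [Module R M]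

lemma isWeaklyRegular_ofFn_succ_iff {n : ℕ} (b : Fin (n + 1) → R) :
    IsWeaklyRegular M (List.ofFn b) ↔ IsWeaklyRegular M (List.ofFn (b ∘ Fin.castSucc)) ∧
      IsSMulRegular (M ⧸ (Ideal.span (Set.range (b ∘ Fin.castSucc)) • ⊤ : Submodule R M))
        (b (Fin.last n)) := by
  rw [List.ofFn_succ', List.concat_eq_append, isWeaklyRegular_append_iff,
    isWeaklyRegular_singleton_iff, Ideal.ofList_ofFn]
  rfl

lemma IsWeaklyRegular.exists_koszul_of_sum_smul_eq_zero {n : ℕ} {b : Fin n → R}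
    (hb : IsWeaklyRegular M (List.ofFn b)) {m : Fin n → M} (hm : ∑ j, b j • m j = 0) :
    ∃ d : Fin n → Fin n → M, ∀ j, m j = ∑ k, b k • (d j k - d k j) := by
  induction n with
  | zero => exact ⟨0, fun j => j.elim0⟩
  | succ n ih =>
    obtain ⟨hinit, hlast⟩ := (isWeaklyRegular_ofFn_succ_iff b).mp hb
    rw [Fin.sum_univ_castSucc] at hm
    have hmem : m (Fin.last n) ∈ (Ideal.span (Set.range (b ∘ Fin.castSucc)) • ⊤ :
        Submodule R M) := by
      refine mem_of_isSMulRegular_quotient_of_smul_mem hlast ?_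
      rw [eq_neg_of_add_eq_zero_right hm, neg_mem_iff]
      exact (Submodule.mem_span_range_smul_top_iff _ _).mpr ⟨_, rfl⟩
    obtain ⟨u, hu⟩ := (Submodule.mem_span_range_smul_top_iff _ _).mp hmem
    have hm' : ∑ j, (b ∘ Fin.castSucc) j • (m j.castSucc + b (Fin.last n) • u j) = 0 := by
      simp only [smul_add, Finset.sum_add_distrib, smul_comm _ (b (Fin.last n)),
        ← Finset.smul_sum, hu]
      exact hm
    obtain ⟨d, hd⟩ := ih hinit hm'
    refine ⟨Fin.lastCases 0 fun j => Fin.lastCases (-u j) (d j), fun j => ?_⟩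
    induction j using Fin.lastCases with
    | last => simp [Fin.sum_univ_castSucc, ← hu]
    | cast j =>
      have hj := hd j
      simp only [Function.comp_apply] at hj
      simp [Fin.sum_univ_castSucc, ← hj]

lemma IsWeaklyRegular.mem_of_mul_mem_span_sub_mul {P : Type*} [CommRing P] {n : ℕ}
    {b : Fin n → P} (hb : IsWeaklyRegular P (List.ofFn b)) {i : Fin n}
    (hbi : IsLeftRegular (b i)) {x : Fin n → P} (hx : x i = 1) {g : P}
    (hg : b i * g ∈ Ideal.span (Set.range fun k => b k - b i * x k)) :
    g ∈ Ideal.span (Set.range fun k => b k - b i * x k) := by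
  -- `b i * g = ∑ h k * f k` turns `h - y • eᵢ` into a syzygy of `b`; in its Koszul form the
  -- products `f l * f k` cancel by antisymmetry, which leaves `b i * g = b i * w` with `w ∈ (f)`.
  set f := fun k => b k - b i * x k with hf
  obtain ⟨h, hh⟩ := (Submodule.mem_span_range_iff_exists_fun P).mp hg
  simp only [smul_eq_mul] at hh
  set y := g + ∑ k, x k * h k
  set m : Fin n → P := h - Pi.single i y
  have hbf : ∀ k, b k = f k + b i * x k := fun k => by simp only [hf]; ring
  have hfi : f i = 0 := by simp only [hf, hx, mul_one, sub_self]
  have hsyz : ∑ k, b k • m k = 0 := by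
    simp only [m, Pi.sub_apply, Pi.single_apply, smul_eq_mul, mul_sub, Finset.sum_sub_distrib,
      mul_ite, mul_zero, Finset.sum_ite_eq', Finset.mem_univ, if_true]
    have hbh : ∀ k, b k * h k = h k * f k + b i * (x k * h k) := fun k => by rw [hbf k]; ring
    simp only [hbh, Finset.sum_add_distrib, hh, ← Finset.mul_sum, y, mul_add, sub_self]
  obtain ⟨d, hd⟩ := hb.exists_koszul_of_sum_smul_eq_zero hsyz
  set w := ∑ k, ∑ l, x l * (d k l - d l k) * f k
  have hmf : ∑ k, m k * f k = b i * g := by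
    simp [m, Pi.single_apply, sub_mul, Finset.sum_sub_distrib, hh, hfi]
  have hmw : ∑ k, m k * f k = b i * w := by
    calc ∑ k, m k * f k
        = ∑ k, ∑ l, (d k l - d l k) * f l * f k + b i * w := by
          simp only [hd, smul_eq_mul, Finset.sum_mul, w, Finset.mul_sum, ← Finset.sum_add_distrib]
          refine Finset.sum_congr rfl fun k _ => Finset.sum_congr rfl fun l _ => ?_
          rw [hbf l]
          ring
      _ = b i * w := by rw [Finset.sum_sum_sub_swap_mul_mul_eq_zero, zero_add]
  rw [hbi (hmf.symm.trans hmw)]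
  exact Ideal.sum_mem _ fun k _ => Ideal.sum_mem _ fun l _ =>
    Ideal.mul_mem_left _ _ (Ideal.subset_span ⟨k, rfl⟩)

lemma IsRegular.ne_zero_of_mem {rs : List R} (h : IsRegular M rs) {r : R} (hr : r ∈ rs) :
    r ≠ 0 := by
  rintro rfl
  obtain ⟨l₁, l₂, rfl⟩ := List.append_of_mem hr
  have hquot := ((isWeaklyRegular_append_iff M _ _).mp h.toIsWeaklyRegular).2
  rw [isWeaklyRegular_cons_iff, IsSMulRegular.zero_iff_subsingleton,
    Submodule.Quotient.subsingleton_iff] at hquot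
  have hle : Ideal.ofList l₁ • ⊤ ≤ (Ideal.ofList (l₁ ++ 0 :: l₂) • ⊤ : Submodule R M) :=
    Submodule.smul_mono_left (Ideal.span_mono fun r hr => List.mem_append_left _ hr)
  rw [hquot.1, top_le_iff] at hle
  exact h.top_ne_smul hle.symm

end RingTheory.Sequence

namespace MvPolynomial

variable {A σ : Type*} [CommRing A]

noncomputable def blowupChartIdeal (c : σ → A) (s : A) : Ideal (MvPolynomial σ A) :=
  Ideal.span (Set.range fun j => C (c j) - X j * C s)

lemma exists_C_pow_mul_sub_C_mem_blowupChartIdeal (c : σ → A) (s : A) (p : MvPolynomial σ A) :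
    ∃ (d : ℕ) (b : A), C s ^ d * p - C b ∈ blowupChartIdeal c s := by
  induction p using MvPolynomial.induction_on with
  | C b => exact ⟨0, b, by simp⟩
  | add p q hp hq =>
    obtain ⟨d₁, b₁, hp⟩ := hp
    obtain ⟨d₂, b₂, hq⟩ := hq
    refine ⟨d₁ + d₂, s ^ d₂ * b₁ + s ^ d₁ * b₂, ?_⟩
    convert Ideal.add_mem _ (Ideal.mul_mem_left _ (C s ^ d₂) hp)
      (Ideal.mul_mem_left _ (C s ^ d₁) hq) using 1
    simp only [map_add, map_mul, map_pow]
    ring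
  | mul_X p j hp =>
    obtain ⟨d, b, hp⟩ := hp
    refine ⟨d + 1, b * c j, ?_⟩
    have hgen : C (c j) - X j * C s ∈ blowupChartIdeal c s := Ideal.subset_span ⟨j, rfl⟩
    convert Ideal.sub_mem _ (Ideal.mul_mem_left _ (X j * C s) hp)
      (Ideal.mul_mem_left _ (C b) hgen) using 1
    simp only [map_mul]
    ring

lemma isPrime_blowupChartIdeal [IsDomain A] {c : σ → A} {s : A} (hs : s ≠ 0)
    (hsat : ∀ g, C s * g ∈ blowupChartIdeal c s → g ∈ blowupChartIdeal c s) :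
    (blowupChartIdeal c s).IsPrime := by
  let K := FractionRing A
  have hinj : Function.Injective (algebraMap A K) := IsFractionRing.injective A K
  have hs' : algebraMap A K s ≠ 0 := (map_ne_zero_iff _ hinj).mpr hs
  let φ : MvPolynomial σ A →ₐ[A] K := aeval fun j => algebraMap A K (c j) / algebraMap A K s
  have hle : blowupChartIdeal c s ≤ RingHom.ker φ := by
    refine Ideal.span_le.mpr ?_
    rintro _ ⟨j, rfl⟩
    simp [φ, div_mul_cancel₀ _ hs']
  suffices RingHom.ker φ ≤ blowupChartIdeal c s from
    le_antisymm hle this ▸ RingHom.ker_isPrime φ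
  intro p hp
  obtain ⟨d, b, hdb⟩ := exists_C_pow_mul_sub_C_mem_blowupChartIdeal c s p
  have hb : b = 0 := by
    have h0 := hle hdb
    rw [RingHom.mem_ker] at hp h0
    rw [map_sub, map_mul, hp, mul_zero, zero_sub, neg_eq_zero, aeval_C] at h0
    exact (map_eq_zero_iff _ hinj).mp h0
  rw [hb, map_zero, sub_zero] at hdb
  induction d with
  | zero => simpa using hdb
  | succ d ih => exact ih (hsat _ (by rwa [pow_succ', mul_assoc] at hdb))

variable (A) in
/-- The coordinate `a_k / aᵢ` on the chart, with `aᵢ / aᵢ = 1`. -/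
noncomputable def blowupChartCoord {ι : Type*} [DecidableEq ι] (i k : ι) :
    MvPolynomial {j // j ≠ i} A :=
  if h : k = i then 1 else X ⟨k, h⟩

lemma span_range_C_sub_C_mul_blowupChartCoord {ι : Type*} [DecidableEq ι] (a : ι → A) (i : ι) :
    Ideal.span (Set.range fun k => C (a k) - C (a i) * blowupChartCoord A i k) =
      blowupChartIdeal (fun j : {j // j ≠ i} => a j) (a i) := by
  refine le_antisymm (Ideal.span_le.mpr ?_) (Ideal.span_le.mpr ?_)
  · rintro _ ⟨k, rfl⟩
    by_cases hk : k = i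
    · simp [hk, blowupChartCoord]
    · simp only [blowupChartCoord, hk, dite_false, mul_comm (C (a i))]
      exact Ideal.subset_span ⟨⟨k, hk⟩, rfl⟩
  · rintro _ ⟨j, rfl⟩
    exact Ideal.subset_span ⟨j.1, by simp [blowupChartCoord, j.2, mul_comm]⟩

end MvPolynomial

theorem blowup_chart_isDomain_general (A : Type*) [CommRing A] [IsDomain A]
    (r : ℕ) (a : Fin r → A) (ha : RingTheory.Sequence.IsRegular A (List.ofFn a))
    (i : Fin r) :
    IsDomain (MvPolynomial {j : Fin r // j ≠ i} A ⧸
      Ideal.span (Set.range fun j : {j : Fin r // j ≠ i} =>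
        C (a j.1) - X j * C (a i))) := by
  have hai : a i ≠ 0 := ha.ne_zero_of_mem ((List.mem_ofFn' a _).mpr ⟨i, rfl⟩)
  have hreg : RingTheory.Sequence.IsWeaklyRegular (MvPolynomial {j : Fin r // j ≠ i} A)
      (List.ofFn fun k => (C (a k) : MvPolynomial {j : Fin r // j ≠ i} A)) := by
    have := ha.toIsWeaklyRegular.of_flat (S := MvPolynomial {j : Fin r // j ≠ i} A)
    rwa [List.map_ofFn, algebraMap_eq] at this
  have hsat : ∀ g, C (a i) * g ∈ blowupChartIdeal (fun j : {j // j ≠ i} => a j) (a i) →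
      g ∈ blowupChartIdeal (fun j : {j // j ≠ i} => a j) (a i) := by
    simpa only [Function.comp_apply, ← span_range_C_sub_C_mul_blowupChartCoord] using fun g =>
      hreg.mem_of_mul_mem_span_sub_mul (g := g)
        (IsLeftCancelMulZero.mul_left_cancel_of_ne_zero (C_ne_zero.mpr hai))
        (by simp [blowupChartCoord])
  exact (Ideal.Quotient.isDomain_iff_prime _).mpr (isPrime_blowupChartIdeal hai hsat)

/-- Let `A` be an integral Noetherian ring, `a₁, …, a_r` a regular sequence in `A`, and
fix an index `i`. Let `R = A[X₁, …, X̂ᵢ, …, X_r]/J` where `J` is generated by the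
elements `a_j − X_j·a_i` for `j ≠ i` (the variable `Xᵢ` is omitted). Then `R` is an
integral domain. -/
theorem blowup_chart_isDomain (A : Type*) [CommRing A] [IsDomain A] [IsNoetherianRing A]
    (r : ℕ) (a : Fin r → A) (ha : RingTheory.Sequence.IsRegular A (List.ofFn a))
    (i : Fin r) :
    IsDomain (MvPolynomial {j : Fin r // j ≠ i} A ⧸
      Ideal.span (Set.range fun j : {j : Fin r // j ≠ i} =>
        C (a j.1) - X j * C (a i))) :=
  blowup_chart_isDomain_general A r a ha i
end

section
/- Let p be an odd prime and let ψ̄(a) ∈ 𝔽_p[a] be the reduction mod p of ψ(a,1−a) = (a^p + (1−a)^p − 1)/p. Then every root of ψ̄ in the algebraic closure of 𝔽_p has multiplicity at most 2, and any root of multiplicity 2 lies in 𝔽_p (in fact in {2, ..., p−1}). -/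
open Polynomial

/-- Let `p` be an odd prime and let `ψ̄ ∈ 𝔽_p[a]` (viewed in the algebraic closure) be
the reduction mod `p` of `ψ(a) = (a^p + (1−a)^p − 1)/p ∈ ℤ[a]`. Then every root of `ψ̄`
in the algebraic closure of `𝔽_p` has multiplicity at most `2`, and any root of
multiplicity `2` lies in `𝔽_p`, in fact in `{2, …, p−1}`. -/
theorem psi_root_multiplicity (p : ℕ) [Fact p.Prime] (hodd : Odd p)
    (ψ : Polynomial ℤ)
    (hψ : C (p : ℤ) * ψ = (X : Polynomial ℤ) ^ p + (1 - X) ^ p - 1)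
    (x : AlgebraicClosure (ZMod p))
    (hx : (ψ.map (Int.castRingHom (AlgebraicClosure (ZMod p)))).IsRoot x) :
    rootMultiplicity x (ψ.map (Int.castRingHom (AlgebraicClosure (ZMod p)))) ≤ 2 ∧
    (rootMultiplicity x (ψ.map (Int.castRingHom (AlgebraicClosure (ZMod p)))) = 2 →
      ∃ k : ℕ, 2 ≤ k ∧ k ≤ p - 1 ∧ x = (k : AlgebraicClosure (ZMod p))) := by
  classical
  have hp : p.Prime := Fact.out
  have hp3 : 3 ≤ p := by
    have h2 := hp.two_le
    rcases hodd with ⟨k, hk⟩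
    omega
  set f := ψ.map (Int.castRingHom (AlgebraicClosure (ZMod p))) with hfdef
  have hCp : (C (p : ℤ)) ≠ 0 := by
    simp only [ne_eq, C_eq_zero, Nat.cast_eq_zero]
    exact hp.ne_zero
  have hψd : derivative ψ = X ^ (p - 1) - (1 - X) ^ (p - 1) := by
    apply mul_left_cancel₀ hCp
    have h := congrArg derivative hψ
    rw [derivative_C_mul] at h
    rw [h, derivative_sub, derivative_add, derivative_pow, derivative_pow, derivative_one,
      derivative_X, derivative_sub, derivative_one, derivative_X]
    ring
  have hdf : derivative f = X ^ (p - 1) - (1 - X) ^ (p - 1) := by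
    rw [hfdef, derivative_map, hψd]
    simp [Polynomial.map_sub, Polynomial.map_pow, Polynomial.map_one]
  have hp1 : p - 1 + 1 = p := Nat.succ_pred_eq_of_pos hp.pos
  have main : 2 ≤ rootMultiplicity x f →
      x ^ (p - 1) = 1 ∧ (1 - x) ^ (p - 1) = 1 := by
    intro h2
    have hdvd : (X - C x) ^ 2 ∣ f := (pow_dvd_pow _ h2).trans (pow_rootMultiplicity_dvd f x)
    have h1 : (X - C x) ∣ derivative f := by
      simpa using pow_sub_one_dvd_derivative_of_pow_dvd hdvd
    have hev : eval x (derivative f) = 0 := dvd_iff_isRoot.mp h1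
    rw [hdf] at hev
    simp only [eval_sub, eval_pow, eval_one, eval_X] at hev
    have hev' : x ^ (p - 1) = (1 - x) ^ (p - 1) := sub_eq_zero.mp hev
    have hchar : (1 - x) ^ p = 1 - x ^ p := by
      rw [sub_pow_char, one_pow]
    have key : x ^ (p - 1) = 1 := by
      have e1 : x ^ (p - 1) * x + (1 - x) ^ (p - 1) * (1 - x) = 1 := by
        rw [← pow_succ, ← pow_succ, hp1, hchar]; ring
      rw [← hev'] at e1
      linear_combination e1
    exact ⟨key, by rw [← hev']; exact key⟩
  constructor
  · by_contra hgt
    push_neg at hgt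
    have h3 : 3 ≤ rootMultiplicity x f := hgt
    obtain ⟨k1, k2⟩ := main (by omega)
    have hdvd : (X - C x) ^ 3 ∣ f := (pow_dvd_pow _ h3).trans (pow_rootMultiplicity_dvd f x)
    have h1 : (X - C x) ∣ derivative (derivative f) := by
      simpa using pow_sub_dvd_iterate_derivative_of_pow_dvd 2 hdvd
    have hev : eval x (derivative (derivative f)) = 0 := dvd_iff_isRoot.mp h1
    rw [hdf] at hev
    have hp2 : p - 2 + 1 = p - 1 := by omega
    have hd2 : derivative ((X : (AlgebraicClosure (ZMod p))[X]) ^ (p - 1) - (1 - X) ^ (p - 1)) =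
        C ((p - 1 : ℕ) : AlgebraicClosure (ZMod p)) * (X ^ (p - 2) + (1 - X) ^ (p - 2)) := by
      rw [derivative_sub, derivative_pow, derivative_pow, derivative_sub, derivative_one,
        derivative_X]
      have h12 : p - 1 - 1 = p - 2 := by omega
      rw [h12]
      ring
    rw [hd2] at hev
    simp only [eval_mul, eval_add, eval_pow, eval_sub, eval_one, eval_X, eval_C] at hev
    have hcast : ((p - 1 : ℕ) : AlgebraicClosure (ZMod p)) = -1 := by
      rw [Nat.cast_sub hp.one_le, Nat.cast_one, CharP.cast_eq_zero (AlgebraicClosure (ZMod p)) p]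
      ring
    rw [hcast] at hev
    have hev0 : x ^ (p - 2) + (1 - x) ^ (p - 2) = 0 := by
      have := mul_eq_zero.mp hev
      rcases this with h | h
      · exact absurd h (by norm_num)
      · exact h
    have contra : (1 : AlgebraicClosure (ZMod p)) = 0 := by
      calc (1 : AlgebraicClosure (ZMod p)) = x ^ (p - 1) * (1 - x) + (1 - x) ^ (p - 1) * x := by rw [k1, k2]; ring
        _ = (x ^ (p - 2) + (1 - x) ^ (p - 2)) * (x * (1 - x)) := by
            rw [← hp2, pow_succ, pow_succ]; ring
        _ = 0 := by rw [hev0, zero_mul]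
    exact one_ne_zero contra
  · intro hm
    obtain ⟨k1, k2⟩ := main (le_of_eq hm.symm)
    have hxp : x ^ p = x := by
      have h := congrArg (fun n => x ^ n) hp1
      simp only [pow_succ, k1, one_mul] at h
      exact h.symm
    set φ := algebraMap (ZMod p) (AlgebraicClosure (ZMod p)) with hφ
    have hinj : Function.Injective φ := φ.injective
    have hne : (X ^ p - X : (AlgebraicClosure (ZMod p))[X]) ≠ 0 :=
      FiniteField.X_pow_card_sub_X_ne_zero (AlgebraicClosure (ZMod p)) hp.one_lt
    have hroot : x ∈ ((X ^ p - X : (AlgebraicClosure (ZMod p))[X]).roots) := by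
      rw [mem_roots hne]
      simp [IsRoot, hxp]
    have hsub : (Finset.univ.image φ) ⊆ ((X ^ p - X : (AlgebraicClosure (ZMod p))[X]).roots).toFinset := by
      intro y hy
      obtain ⟨a, _, rfl⟩ := Finset.mem_image.mp hy
      rw [Multiset.mem_toFinset, mem_roots hne]
      simp only [IsRoot, eval_sub, eval_pow, eval_X]
      rw [← map_pow, ZMod.pow_card, sub_self]
    have hcard : ((X ^ p - X : (AlgebraicClosure (ZMod p))[X]).roots).toFinset.card ≤ p := by
      calc ((X ^ p - X : (AlgebraicClosure (ZMod p))[X]).roots).toFinset.card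
          ≤ Multiset.card (X ^ p - X : (AlgebraicClosure (ZMod p))[X]).roots := Multiset.toFinset_card_le _
        _ ≤ (X ^ p - X : (AlgebraicClosure (ZMod p))[X]).natDegree := card_roots' _
        _ = p := FiniteField.X_pow_card_sub_X_natDegree_eq (AlgebraicClosure (ZMod p)) hp.one_lt
    have hcard2 : (Finset.univ.image φ).card = p := by
      rw [Finset.card_image_of_injective _ hinj, Finset.card_univ, ZMod.card]
    have heq : (Finset.univ.image φ) = ((X ^ p - X : (AlgebraicClosure (ZMod p))[X]).roots).toFinset :=
      Finset.eq_of_subset_of_card_le hsub (by rw [hcard2]; exact hcard)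
    have hxmem : x ∈ Finset.univ.image φ := by
      rw [heq, Multiset.mem_toFinset]; exact hroot
    obtain ⟨a, -, hax⟩ := Finset.mem_image.mp hxmem
    have hx0 : x ≠ 0 := by
      intro h
      rw [h, zero_pow (by omega : p - 1 ≠ 0)] at k1
      exact zero_ne_one k1
    have hx1 : x ≠ 1 := by
      intro h
      rw [h, sub_self, zero_pow (by omega : p - 1 ≠ 0)] at k2
      exact zero_ne_one k2
    have ha0 : a ≠ 0 := by rintro rfl; exact hx0 (by rw [← hax, map_zero])
    have ha1 : a ≠ 1 := by rintro rfl; exact hx1 (by rw [← hax, map_one])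
    have hva : ((a.val : ℕ) : ZMod p) = a := ZMod.natCast_rightInverse a
    refine ⟨a.val, ?_, ?_, ?_⟩
    · have h0 : a.val ≠ 0 := by
        intro h; apply ha0; rw [← hva, h, Nat.cast_zero]
      have h1 : a.val ≠ 1 := by
        intro h; apply ha1; rw [← hva, h, Nat.cast_one]
      omega
    · have := ZMod.val_lt a
      omega
    · rw [← hax, ← map_natCast φ a.val, hva]
end

section
/- Let N be odd squarefree composite, g = (N−1)(N−2)/2, and for a prime divisor p of N let β(N,p) = α(N,p)·(Np + 2N − 6p)·(p−2) / ((N−1)(N−2)(N−3)³·p⁴) with α(N,p) = 4N⁴p − 6N³p² − 24N³p + 37N²p² + 44N²p − 72Np² − 4N² − 12Np + 36p². Then Σ_{p|N} (φ(N)/(p−1))·β(N,p)·log p > (1/(5N²))·φ(N)·log N. -/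
private lemma key_poly (x q : ℝ) (hx : 15 ≤ x) (hq : 3 ≤ q) (hqx : 3*q ≤ x) :
    (q-1) * ((x-1)*(x-2)*(x-3)^3*q^4) <
      (4*x^4*q - 6*x^3*q^2 - 24*x^3*q + 37*x^2*q^2 + 44*x^2*q - 72*x*q^2 - 4*x^2 - 12*x*q + 36*q^2)
        * (x*q+2*x-6*q) * (q-2) * (5*x^2) := by
  have hx0 : (0:ℝ) ≤ x := by linarith
  have hq0 : (0:ℝ) ≤ q := by linarith
  have hA0 : 2/5*x^4*q ≤ 4*x^4*q - 6*x^3*q^2 - 24*x^3*q + 37*x^2*q^2 + 44*x^2*q - 72*x*q^2 - 4*x^2 - 12*x*q + 36*q^2 := by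
    nlinarith [mul_nonneg (mul_nonneg (mul_nonneg (mul_nonneg hx0 hx0) hx0) hq0) (by linarith : (0:ℝ) ≤ x - 3*q),
      mul_nonneg (mul_nonneg (mul_nonneg (mul_nonneg hx0 hx0) hx0) hq0) (by linarith : (0:ℝ) ≤ x - 15),
      mul_nonneg (mul_nonneg (mul_nonneg hx0 hq0) hq0) (by linarith : (0:ℝ) ≤ x - 15),
      mul_nonneg (mul_nonneg hx0 hx0) (by linarith : (0:ℝ) ≤ q - 3),
      mul_nonneg (mul_nonneg hx0 hq0) (by linarith : (0:ℝ) ≤ x - 15),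
      mul_nonneg (mul_nonneg hx0 hx0) (mul_nonneg hq0 hq0),
      mul_nonneg (mul_nonneg hx0 hx0) hq0, mul_nonneg hq0 hq0]
  have hcore : q^3 < 2*x^2*(q-2) := by
    nlinarith [mul_nonneg (mul_nonneg (by linarith : (0:ℝ) ≤ x - 3*q) (by linarith : (0:ℝ) ≤ x + 3*q)) (by linarith : (0:ℝ) ≤ q - 2),
      mul_nonneg (mul_nonneg hq0 hq0) (by linarith : (0:ℝ) ≤ q - 3)]
  have hx5 : (x-1)*(x-2)*(x-3)^3 ≤ x^5 := by
    have hA : (x-1)*(x-2) ≤ x^2 := by nlinarith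
    have hB : (x-3)^3 ≤ x^3 := by nlinarith [sq_nonneg (x - 3/2)]
    nlinarith [mul_le_mul hA hB (pow_nonneg (by linarith) 3) (by positivity)]
  calc (q-1) * ((x-1)*(x-2)*(x-3)^3*q^4)
      ≤ q * (x^5*q^4) := by
        have hD : (0:ℝ) ≤ (x-1)*(x-2)*(x-3)^3 :=
          mul_nonneg (mul_nonneg (by linarith) (by linarith)) (pow_nonneg (by linarith) 3)
        have h1 := mul_le_mul (show q-1 ≤ q by linarith) hx5 hD (by linarith)
        nlinarith [mul_le_mul_of_nonneg_right h1 (pow_nonneg hq0 4)]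
    _ < (2/5*x^4*q) * (x*q) * (q-2) * (5*x^2) := by
        nlinarith [mul_lt_mul_of_pos_left hcore (show (0:ℝ) < x^5*q^2 by positivity)]
    _ ≤ _ := by
        have h1 := mul_le_mul hA0 (show x*q ≤ x*q+2*x-6*q by linarith) (by positivity)
          (le_trans (by positivity) hA0)
        have h2 := mul_le_mul_of_nonneg_right h1 (show (0:ℝ) ≤ q-2 by linarith)
        have h3 := mul_le_mul_of_nonneg_right h2 (show (0:ℝ) ≤ 5*x^2 by positivity)
        linarith [h3]

/-- Let `N` be odd, squarefree and composite, `φ` Euler's totient, and for each prime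
`p | N` let `β(N,p) = α(N,p)·(Np + 2N − 6p)·(p−2) / ((N−1)(N−2)(N−3)³·p⁴)` with
`α(N,p) = 4N⁴p − 6N³p² − 24N³p + 37N²p² + 44N²p − 72Np² − 4N² − 12Np + 36p²`. Then
`Σ_{p|N} (φ(N)/(p−1))·β(N,p)·log p > (1/(5N²))·φ(N)·log N`. -/
theorem lower_bound_sum (N : ℕ) (hodd : Odd N) (hsq : Squarefree N)
    (hcomp : ¬ N.Prime) (h1 : N ≠ 1) :
    (1 / (5 * (N : ℝ) ^ 2)) * (Nat.totient N : ℝ) * Real.log N <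
      ∑ p ∈ N.primeFactors,
        ((Nat.totient N : ℝ) / ((p : ℝ) - 1)) *
          ((4 * (N : ℝ) ^ 4 * p - 6 * (N : ℝ) ^ 3 * p ^ 2 - 24 * (N : ℝ) ^ 3 * p +
              37 * (N : ℝ) ^ 2 * p ^ 2 + 44 * (N : ℝ) ^ 2 * p -
              72 * (N : ℝ) * p ^ 2 - 4 * (N : ℝ) ^ 2 - 12 * (N : ℝ) * p +
              36 * (p : ℝ) ^ 2) *
            ((N : ℝ) * p + 2 * N - 6 * p) * ((p : ℝ) - 2) /
            (((N : ℝ) - 1) * ((N : ℝ) - 2) * ((N : ℝ) - 3) ^ 3 * (p : ℝ) ^ 4)) *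
          Real.log p := by
  have hN15 : 15 ≤ N := by
    by_contra h
    push_neg at h
    interval_cases N
    · exact absurd hodd (by decide)
    · exact h1 rfl
    · exact absurd hodd (by decide)
    · exact hcomp (by norm_num)
    · exact absurd hodd (by decide)
    · exact hcomp (by norm_num)
    · exact absurd hodd (by decide)
    · exact hcomp (by norm_num)
    · exact absurd hodd (by decide)
    · exact absurd (Nat.isUnit_iff.mp (hsq 3 (by norm_num))) (by norm_num)
    · exact absurd hodd (by decide)
    · exact hcomp (by norm_num)
    · exact absurd hodd (by decide)
    · exact hcomp (by norm_num)
    · exact absurd hodd (by decide)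
  have hx : (15:ℝ) ≤ (N:ℝ) := by exact_mod_cast hN15
  have hφ : (0:ℝ) < (N.totient : ℝ) := by
    exact_mod_cast Nat.totient_pos.mpr (by omega : 0 < N)
  have hne : N.primeFactors.Nonempty :=
    Nat.nonempty_primeFactors.mpr (by omega)
  have hsum : ∑ p ∈ N.primeFactors, Real.log (p:ℝ) = Real.log (N:ℝ) := by
    rw [← Real.log_prod (s := N.primeFactors) (f := fun p : ℕ => (p:ℝ)) (fun p hp => by
      have := (Nat.prime_of_mem_primeFactors hp).pos
      positivity)]
    rw [← Nat.cast_prod, Nat.prod_primeFactors_of_squarefree hsq]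
  rw [show (1 / (5 * (N : ℝ) ^ 2)) * (Nat.totient N : ℝ) * Real.log N
      = ∑ p ∈ N.primeFactors, (1 / (5 * (N : ℝ) ^ 2)) * (Nat.totient N : ℝ) * Real.log (p:ℝ) by
    rw [← Finset.mul_sum, hsum]]
  refine Finset.sum_lt_sum_of_nonempty hne ?_
  intro p hp
  have hpp := Nat.prime_of_mem_primeFactors hp
  have hpd := Nat.dvd_of_mem_primeFactors hp
  have hoddN : N % 2 = 1 := Nat.odd_iff.mp hodd
  have hp3 : 3 ≤ p := by
    have h2 := hpp.two_le
    rcases eq_or_ne p 2 with rfl | hne2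
    · omega
    · omega
  have h3p : 3 * p ≤ N := by
    obtain ⟨m, hm⟩ := hpd
    have hm1 : m ≠ 1 := by
      rintro rfl
      rw [mul_one] at hm
      exact hcomp (hm ▸ hpp)
    have hm0 : m ≠ 0 := by rintro rfl; omega
    have hm2 : ¬ (2 ∣ m) := by
      intro h2
      have : 2 ∣ N := hm ▸ Dvd.dvd.mul_left h2 p
      omega
    have h3m : 3 ≤ m := by omega
    calc 3 * p = p * 3 := by ring
      _ ≤ p * m := Nat.mul_le_mul_left p h3m
      _ = N := hm.symm
  -- real versions
  have hq : (3:ℝ) ≤ (p:ℝ) := by exact_mod_cast hp3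
  have hqx : 3*(p:ℝ) ≤ (N:ℝ) := by exact_mod_cast h3p
  have hlog : 0 < Real.log (p:ℝ) := Real.log_pos (by exact_mod_cast hpp.one_lt)
  apply mul_lt_mul_of_pos_right _ hlog
  have hq1 : (0:ℝ) < (p:ℝ) - 1 := by linarith
  have hDen : (0:ℝ) < ((N:ℝ)-1)*((N:ℝ)-2)*((N:ℝ)-3)^3*(p:ℝ)^4 :=
    mul_pos (mul_pos (mul_pos (by linarith) (by linarith)) (pow_pos (by linarith) 3))
      (pow_pos (by linarith) 4)
  rw [div_mul_div_comm, one_div_mul_eq_div,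
    div_lt_div_iff₀ (by positivity) (mul_pos hq1 hDen)]
  have hmul := mul_lt_mul_of_pos_left (key_poly (N:ℝ) (p:ℝ) hx hq hqx) hφ
  nlinarith [hmul]
end
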